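/- arXiv:1503.02482 — 2 statements merged into one kernel-verified Lean document; each statement's English description precedes it below -/
import Mathlib

section
/- Let (G,P,Δ) be a Garside group of finite type and let v = v̄Δ^ℤ and w = w̄Δ^ℤ be two vertices of the additional length complex C_AL(G). Then the preferred path A(v,w) is the concatenation of the paths A(v,(v̄ ∧ w̄)Δ^ℤ) and A((v̄ ∧ w̄)Δ^ℤ, w); in particular A(v,w) passes through the vertex (v̄ ∧ w̄)Δ^ℤ. -/
/-- A Garside group of finite type: a group `G` (the group of fractions of its positive
monoid `P`), with a Garside element `Δ`, together with the associated data (left gcds,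
infimum, supremum, distinguished coset representatives) satisfying the Garside axioms.
Here `u ≼ v` (prefix order) is encoded by `u⁻¹ * v ∈ P` and `u` being a suffix of `v`
by `v * u⁻¹ ∈ P`. -/
structure GarsideGroup (G : Type*) [Group G] where
  /-- the positive monoid, viewed inside its group of fractions -/
  P : Submonoid G
  /-- the Garside element -/
  Δ : G
  delta_pos : Δ ∈ P
  /-- `G` is the group of fractions of `P` -/
  fractions : ∀ x : G, ∃ p ∈ P, ∃ q ∈ P, x = p⁻¹ * q
  /-- atomicity: the lengths of decompositions of a positive element into nontrivial
  positive factors are bounded -/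
  atomic : ∀ p ∈ P, ∃ N : ℕ,
    ∀ l : List G, (∀ a ∈ l, a ∈ P ∧ a ≠ 1) → l.prod = p → l.length ≤ N
  /-- left gcds for the prefix order -/
  lgcd : G → G → G
  lgcd_dvd_left : ∀ a b : G, (lgcd a b)⁻¹ * a ∈ P
  lgcd_dvd_right : ∀ a b : G, (lgcd a b)⁻¹ * b ∈ P
  lgcd_greatest : ∀ a b c : G, c⁻¹ * a ∈ P → c⁻¹ * b ∈ P → c⁻¹ * lgcd a b ∈ P
  /-- left lcms exist -/
  llcm_exists : ∀ a b : G, ∃ m : G, a⁻¹ * m ∈ P ∧ b⁻¹ * m ∈ P ∧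
    ∀ c : G, a⁻¹ * c ∈ P → b⁻¹ * c ∈ P → m⁻¹ * c ∈ P
  /-- right gcds exist -/
  rgcd_exists : ∀ a b : G, ∃ d : G, a * d⁻¹ ∈ P ∧ b * d⁻¹ ∈ P ∧
    ∀ c : G, a * c⁻¹ ∈ P → b * c⁻¹ ∈ P → d * c⁻¹ ∈ P
  /-- right lcms exist -/
  rlcm_exists : ∀ a b : G, ∃ m : G, m * a⁻¹ ∈ P ∧ m * b⁻¹ ∈ P ∧
    ∀ c : G, c * a⁻¹ ∈ P → c * b⁻¹ ∈ P → c * m⁻¹ ∈ P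
  /-- the left divisors of `Δ` coincide with its right divisors (the simple elements) -/
  simples_symm : ∀ s : G, (s ∈ P ∧ s⁻¹ * Δ ∈ P) ↔ (s ∈ P ∧ Δ * s⁻¹ ∈ P)
  /-- finite type: there are only finitely many simple elements -/
  simples_finite : {s : G | s ∈ P ∧ s⁻¹ * Δ ∈ P}.Finite
  /-- the simple elements generate `P` -/
  simples_generate : ∀ p ∈ P, p ∈ Submonoid.closure {s : G | s ∈ P ∧ s⁻¹ * Δ ∈ P}
  /-- the infimum: `ginf x = max { r : ℤ | Δ^r ≼ x }` -/
  ginf : G → ℤ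
  ginf_dvd : ∀ x : G, (Δ ^ ginf x)⁻¹ * x ∈ P
  ginf_max : ∀ (x : G) (r : ℤ), (Δ ^ r)⁻¹ * x ∈ P → r ≤ ginf x
  /-- the supremum: `gsup x = min { s : ℤ | x ≼ Δ^s }` -/
  gsup : G → ℤ
  gsup_dvd : ∀ x : G, x⁻¹ * Δ ^ gsup x ∈ P
  gsup_min : ∀ (x : G) (s : ℤ), x⁻¹ * Δ ^ s ∈ P → gsup x ≤ s
  /-- each coset `gΔ^ℤ` has a unique distinguished representative, of infimum `0` -/
  rep : G ⧸ Subgroup.zpowers Δ → G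
  rep_mem : ∀ v : G ⧸ Subgroup.zpowers Δ,
    (QuotientGroup.mk (rep v) : G ⧸ Subgroup.zpowers Δ) = v
  rep_inf : ∀ v : G ⧸ Subgroup.zpowers Δ, ginf (rep v) = 0
  rep_eq : ∀ x : G, ginf x = 0 → rep (QuotientGroup.mk x) = x

namespace GarsideGroup

variable {G : Type*} [Group G]

/-- the prefix order: `u ≼ v` -/
def LDvd (g : GarsideGroup G) (u v : G) : Prop := u⁻¹ * v ∈ g.P

/-- the suffix order: `u` is a suffix of `v` -/
def RDvd (g : GarsideGroup G) (u v : G) : Prop := v * u⁻¹ ∈ g.P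

/-- simple elements: positive left divisors of `Δ` -/
def Simple (g : GarsideGroup G) (s : G) : Prop := s ∈ g.P ∧ g.LDvd s g.Δ

/-- atoms of the positive monoid -/
def Atom (g : GarsideGroup G) (a : G) : Prop :=
  a ∈ g.P ∧ a ≠ 1 ∧ ∀ u v : G, u ∈ g.P → v ∈ g.P → a = u * v → u = 1 ∨ v = 1

/-- the canonical length `ℓ(x) = sup(x) - inf(x)` -/
def ell (g : GarsideGroup G) (x : G) : ℤ := g.gsup x - g.ginf x

/-- the (powers of the) inner automorphism `τ(x) = Δ⁻¹ x Δ`: `tau k x = Δ^{-k} x Δ^k` -/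
def tau (g : GarsideGroup G) (k : ℤ) (x : G) : G := g.Δ ^ (-k) * x * g.Δ ^ k

/-- the right complement `∂y = y⁻¹ Δ^{sup y}` -/
def comp (g : GarsideGroup G) (y : G) : G := y⁻¹ * g.Δ ^ g.gsup y

/-- `x` absorbs `y` -/
def Absorbs (g : GarsideGroup G) (x y : G) : Prop :=
  g.ginf (x * y) = g.ginf x ∧ g.gsup (x * y) = g.gsup x

/-- absorbable elements -/
def Absorbable (g : GarsideGroup G) (y : G) : Prop :=
  (g.ginf y = 0 ∨ g.gsup y = 0) ∧ ∃ x : G, g.Absorbs x y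

end GarsideGroup
namespace GarsideGroup

variable {G : Type*} [Group G]

/-- the vertex set of the additional length complex: cosets `gΔ^ℤ` -/
abbrev Vertex (g : GarsideGroup G) : Type _ := G ⧸ Subgroup.zpowers g.Δ

/-- the vertex represented by a group element -/
def vtx (g : GarsideGroup G) (a : G) : Vertex g := QuotientGroup.mk a

/-- there is an edge from `v` to `w` labelled by a non-trivial, non-`Δ` simple element,
or by an absorbable element -/
def Step (g : GarsideGroup G) (v w : Vertex g) : Prop :=
  (∃ m : G, g.Simple m ∧ m ≠ 1 ∧ m ≠ g.Δ ∧ g.vtx (g.rep v * m) = w) ∨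
  (∃ y : G, g.Absorbable y ∧ g.vtx (g.rep v * y) = w)

/-- the additional length complex `C_AL(G)`, as a graph on `G/⟨Δ⟩` -/
def calGraph (g : GarsideGroup G) : SimpleGraph (Vertex g) where
  Adj v w := v ≠ w ∧ (g.Step v w ∨ g.Step w v)
  symm := ⟨fun _ _ h => ⟨h.1.symm, h.2.symm⟩⟩
  loopless := ⟨fun _ h => h.1 rfl⟩

/-- the additional length metric `d_AL`: the graph distance on `C_AL(G)` (each edge
having length `1`) -/
noncomputable def dAL (g : GarsideGroup G) (v w : Vertex g) : ℕ := (g.calGraph).dist v w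

/-- `l` is a left normal form (of the element `l.prod`, of infimum `0`): all factors are
simple, different from `1` and `Δ`, and each consecutive pair is left-weighted, i.e.
`l[i] = Δ ∧ (l[i] ⋯ l[r])` for all `i`. -/
def IsLNF (g : GarsideGroup G) (l : List G) : Prop :=
  (∀ s ∈ l, g.Simple s ∧ s ≠ 1 ∧ s ≠ g.Δ) ∧
  ∀ (i : ℕ) (h : i < l.length), ∀ c : G,
    g.LDvd c g.Δ → g.LDvd c (l.drop i).prod → g.LDvd c (l.get ⟨i, h⟩)

/-- `l` is a right normal form: all factors are simple, different from `1` and `Δ`, and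
`l[i] = (l[0] ⋯ l[i]) ∧↰ Δ` (right gcd) for all `i`. -/
def IsRNF (g : GarsideGroup G) (l : List G) : Prop :=
  (∀ s ∈ l, g.Simple s ∧ s ≠ 1 ∧ s ≠ g.Δ) ∧
  ∀ (i : ℕ) (h : i < l.length), ∀ c : G,
    g.RDvd c g.Δ → g.RDvd c (l.take (i + 1)).prod → g.RDvd c (l.get ⟨i, h⟩)

/-- the distinguished representative of the coset `(v̄⁻¹w̄)Δ^ℤ` -/
def relRep (g : GarsideGroup G) (v w : Vertex g) : G :=
  g.rep (g.vtx ((g.rep v)⁻¹ * g.rep w))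

/-- the vertices visited by the edge-path starting at `v` whose edges are labelled by
the entries of `l` -/
def pathVertices (g : GarsideGroup G) (v : Vertex g) (l : List G) : List (Vertex g) :=
  (List.range (l.length + 1)).map fun i => g.vtx (g.rep v * (l.take i).prod)

/-- `l` is the list of labels of the preferred path `A(v,w)`: the left normal form of the
distinguished representative of `(v̄⁻¹w̄)Δ^ℤ`.  The vertices visited by `A(v,w)` are then
`g.pathVertices v l`. -/
def IsPrefPath (g : GarsideGroup G) (v w : Vertex g) (l : List G) : Prop :=
  g.IsLNF l ∧ l.prod = g.relRep v w

end GarsideGroup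

namespace GarsideGroup

variable {G : Type*} [Group G] (g : GarsideGroup G)

/-! ### units -/

private lemma exists_long_list (p : G) (hp : p ∈ g.P) (hp' : p⁻¹ ∈ g.P) (hne : p ≠ 1) :
    ∀ n : ℕ, ∃ l : List G, (∀ a ∈ l, a ∈ g.P ∧ a ≠ 1) ∧ l.prod = p ∧ l.length = 2*n+1 := by
  intro n
  induction n with
  | zero => exact ⟨[p], by simp [hp, hne], by simp, by simp⟩
  | succ n ih =>
    obtain ⟨l, h1, h2, h3⟩ := ih
    refine ⟨p :: p⁻¹ :: l, ?_, by simp [h2], by simp [h3]; ring⟩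
    intro x hx
    simp only [List.mem_cons] at hx
    rcases hx with rfl | rfl | hx
    · exact ⟨hp, hne⟩
    · exact ⟨hp', by simpa using hne⟩
    · exact h1 x hx

lemma eq_one_of_unit {p : G} (hp : p ∈ g.P) (hp' : p⁻¹ ∈ g.P) : p = 1 := by
  by_contra hne
  obtain ⟨N, hN⟩ := g.atomic p hp
  obtain ⟨l, h1, h2, h3⟩ := g.exists_long_list p hp hp' hne N
  have := hN l h1 h2
  omega

lemma ldvd_antisymm {u v : G} (h1 : g.LDvd u v) (h2 : g.LDvd v u) : u = v := by
  have : u⁻¹ * v = 1 := g.eq_one_of_unit h1 (by simpa [LDvd] using h2)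
  have h3 := congrArg (u * ·) this
  simp only [mul_one] at h3
  rw [← mul_assoc] at h3
  simpa using h3.symm

lemma ldvd_trans {u v w : G} (h1 : g.LDvd u v) (h2 : g.LDvd v w) : g.LDvd u w := by
  have := mul_mem h1 h2
  simpa [LDvd, mul_assoc] using this

lemma ldvd_mul_right {u v : G} (h1 : g.LDvd u v) {c : G} (hc : c ∈ g.P) :
    g.LDvd u (v * c) := by
  have := mul_mem h1 hc
  simpa [LDvd, mul_assoc] using this

/-! ### conjugation by Δ -/

lemma tau_one_mem {x : G} (hx : x ∈ g.P) : g.Δ⁻¹ * x * g.Δ ∈ g.P := by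
  have h := g.simples_generate x hx
  clear hx
  induction h using Submonoid.closure_induction with
  | mem s hs =>
      obtain ⟨hsP, hsd⟩ := hs
      have h2 : g.Δ * (s⁻¹ * g.Δ)⁻¹ ∈ g.P := by
        rw [show g.Δ * (s⁻¹ * g.Δ)⁻¹ = s by group]
        exact hsP
      have h3 : (s⁻¹ * g.Δ)⁻¹ * g.Δ ∈ g.P :=
        ((g.simples_symm (s⁻¹ * g.Δ)).mpr ⟨hsd, h2⟩).2
      have he : g.Δ⁻¹ * s * g.Δ = (s⁻¹ * g.Δ)⁻¹ * g.Δ := by group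
      rw [he]; exact h3
  | one => simpa using g.P.one_mem
  | mul a b _ _ iha ihb =>
      have he : g.Δ⁻¹ * (a * b) * g.Δ = (g.Δ⁻¹ * a * g.Δ) * (g.Δ⁻¹ * b * g.Δ) := by group
      rw [he]; exact mul_mem iha ihb

lemma tau_neg_one_mem {x : G} (hx : x ∈ g.P) : g.Δ * x * g.Δ⁻¹ ∈ g.P := by
  have h := g.simples_generate x hx
  clear hx
  induction h using Submonoid.closure_induction with
  | mem s hs =>
      obtain ⟨hsP, hsd⟩ := hs
      have h1 : g.Δ * s⁻¹ ∈ g.P := ((g.simples_symm s).mp ⟨hsP, hsd⟩).2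
      have h2 : (g.Δ * s⁻¹)⁻¹ * g.Δ ∈ g.P := by
        rw [show (g.Δ * s⁻¹)⁻¹ * g.Δ = s by group]
        exact hsP
      have h3 : g.Δ * (g.Δ * s⁻¹)⁻¹ ∈ g.P :=
        ((g.simples_symm (g.Δ * s⁻¹)).mp ⟨h1, h2⟩).2
      have he : g.Δ * s * g.Δ⁻¹ = g.Δ * (g.Δ * s⁻¹)⁻¹ := by group
      rw [he]; exact h3
  | one => simpa using g.P.one_mem
  | mul a b _ _ iha ihb =>
      have he : g.Δ * (a * b) * g.Δ⁻¹ = (g.Δ * a * g.Δ⁻¹) * (g.Δ * b * g.Δ⁻¹) := by group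
      rw [he]; exact mul_mem iha ihb

lemma tau_mem (k : ℤ) {x : G} (hx : x ∈ g.P) : g.tau k x ∈ g.P := by
  unfold tau
  induction k using Int.induction_on with
  | zero => simpa using hx
  | succ n ih =>
      have he : g.Δ ^ (-((n:ℤ)+1)) * x * g.Δ ^ ((n:ℤ)+1)
          = g.Δ⁻¹ * (g.Δ ^ (-(n:ℤ)) * x * g.Δ ^ (n:ℤ)) * g.Δ := by group
      rw [he]; exact g.tau_one_mem ih
  | pred n ih =>
      have he : g.Δ ^ (-(-(n:ℤ)-1)) * x * g.Δ ^ (-(n:ℤ)-1)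
          = g.Δ * (g.Δ ^ (-(-(n:ℤ))) * x * g.Δ ^ (-(n:ℤ))) * g.Δ⁻¹ := by group
      rw [he]; exact g.tau_neg_one_mem ih

lemma tau_tau (m k : ℤ) (x : G) : g.tau m (g.tau k x) = g.tau (k + m) x := by
  unfold tau; group

lemma tau_zero (x : G) : g.tau 0 x = x := by unfold tau; group

lemma tau_cancel (k : ℤ) (x : G) : g.tau (-k) (g.tau k x) = x := by
  rw [g.tau_tau, add_neg_cancel, g.tau_zero]

lemma tau_cancel' (k : ℤ) (x : G) : g.tau k (g.tau (-k) x) = x := by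
  rw [g.tau_tau, neg_add_cancel, g.tau_zero]

lemma tau_mem_iff (k : ℤ) {x : G} : g.tau k x ∈ g.P ↔ x ∈ g.P := by
  constructor
  · intro h
    have := g.tau_mem (-k) h
    rwa [g.tau_tau, add_neg_cancel, g.tau_zero] at this
  · exact g.tau_mem k

lemma conj_mem (k : ℤ) {x : G} (hx : x ∈ g.P) : g.Δ ^ k * x * g.Δ ^ (-k) ∈ g.P := by
  have := g.tau_mem (-k) hx
  unfold tau at this
  simpa using this

lemma tau_mul (k : ℤ) (x y : G) : g.tau k (x * y) = g.tau k x * g.tau k y := by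
  unfold tau; group

lemma tau_inv (k : ℤ) (x : G) : g.tau k x⁻¹ = (g.tau k x)⁻¹ := by
  unfold tau; group

lemma tau_delta (k : ℤ) : g.tau k g.Δ = g.Δ := by unfold tau; group

lemma tau_one (k : ℤ) : g.tau k (1 : G) = 1 := by unfold tau; group

lemma tau_inj {k : ℤ} {x y : G} (h : g.tau k x = g.tau k y) : x = y := by
  unfold tau at h
  have := congrArg (fun z => g.Δ ^ k * z * g.Δ ^ (-k)) h
  simpa [mul_assoc, ← zpow_add] using this

lemma tau_eq_one_iff {k : ℤ} {x : G} : g.tau k x = 1 ↔ x = 1 :=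
  ⟨fun h => g.tau_inj (k := k) (by rw [h, g.tau_one]), fun h => by rw [h, g.tau_one]⟩

lemma tau_ldvd_iff (k : ℤ) {u v : G} : g.LDvd (g.tau k u) (g.tau k v) ↔ g.LDvd u v := by
  unfold LDvd
  rw [show (g.tau k u)⁻¹ * g.tau k v = g.tau k (u⁻¹ * v) by unfold tau; group]
  exact g.tau_mem_iff k

lemma tau_simple (k : ℤ) {s : G} (hs : g.Simple s) : g.Simple (g.tau k s) := by
  refine ⟨g.tau_mem k hs.1, ?_⟩
  have := (g.tau_ldvd_iff k (u := s) (v := g.Δ)).mpr hs.2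
  rwa [g.tau_delta] at this

/-! ### powers of Δ -/

lemma delta_zpow_mem {m : ℤ} (hm : 0 ≤ m) : g.Δ ^ m ∈ g.P := by
  obtain ⟨n, rfl⟩ := Int.eq_ofNat_of_zero_le hm
  rw [zpow_natCast]
  exact pow_mem g.delta_pos n

lemma ginf_one_nonneg : 0 ≤ g.ginf 1 := g.ginf_max 1 0 (by simpa using g.P.one_mem)

lemma delta_zpow_eq_one {m : ℤ} (h : g.Δ ^ m = 1) : m = 0 := by
  by_contra hm
  have key : ∀ r : ℤ, m * r ≤ g.ginf 1 := by
    intro r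
    apply g.ginf_max 1 (m * r)
    rw [zpow_mul, h]
    simpa using g.P.one_mem
  have h1 := key (m * (g.ginf 1 + 1))
  have h2 := g.ginf_one_nonneg
  have hm2 : 1 ≤ m * m := by rcases lt_or_gt_of_ne hm with h | h <;> nlinarith
  have h3 : 1 * (g.ginf 1 + 1) ≤ (m * m) * (g.ginf 1 + 1) :=
    mul_le_mul_of_nonneg_right hm2 (by omega)
  rw [← mul_assoc] at h1
  omega

lemma zpow_ldvd {r s : ℤ} (h : r ≤ s) : (g.Δ ^ r)⁻¹ * g.Δ ^ s ∈ g.P := by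
  rw [← zpow_neg, ← zpow_add]
  exact g.delta_zpow_mem (by omega)

lemma ginf_le_dvd (x : G) {r : ℤ} (h : r ≤ g.ginf x) : (g.Δ ^ r)⁻¹ * x ∈ g.P := by
  have := mul_mem (g.zpow_ldvd h) (g.ginf_dvd x)
  simpa [mul_assoc] using this

lemma gsup_le_dvd (x : G) {s : ℤ} (h : g.gsup x ≤ s) : x⁻¹ * g.Δ ^ s ∈ g.P := by
  have := mul_mem (g.gsup_dvd x) (g.zpow_ldvd h)
  simpa [mul_assoc] using this

lemma ginf_nonneg {x : G} (hx : x ∈ g.P) : 0 ≤ g.ginf x :=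
  g.ginf_max x 0 (by simpa using hx)

/-! ### shifting inf and sup -/

lemma ginf_mul_zpow_le (x : G) (k : ℤ) : g.ginf x + k ≤ g.ginf (x * g.Δ ^ k) := by
  apply g.ginf_max
  have he : (g.Δ ^ (g.ginf x + k))⁻¹ * (x * g.Δ ^ k)
      = g.Δ ^ (-k) * ((g.Δ ^ g.ginf x)⁻¹ * x) * g.Δ ^ k := by group
  rw [he]
  exact g.tau_mem k (g.ginf_dvd x)

lemma ginf_mul_zpow (x : G) (k : ℤ) : g.ginf (x * g.Δ ^ k) = g.ginf x + k := by
  refine le_antisymm ?_ (g.ginf_mul_zpow_le x k)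
  have := g.ginf_mul_zpow_le (x * g.Δ ^ k) (-k)
  rw [show x * g.Δ ^ k * g.Δ ^ (-k) = x by group] at this
  omega

lemma gsup_mul_zpow_le (x : G) (k : ℤ) : g.gsup (x * g.Δ ^ k) ≤ g.gsup x + k := by
  apply g.gsup_min
  have he : (x * g.Δ ^ k)⁻¹ * g.Δ ^ (g.gsup x + k)
      = g.Δ ^ (-k) * (x⁻¹ * g.Δ ^ g.gsup x) * g.Δ ^ k := by group
  rw [he]
  exact g.tau_mem k (g.gsup_dvd x)

lemma gsup_mul_zpow (x : G) (k : ℤ) : g.gsup (x * g.Δ ^ k) = g.gsup x + k := by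
  refine le_antisymm (g.gsup_mul_zpow_le x k) ?_
  have := g.gsup_mul_zpow_le (x * g.Δ ^ k) (-k)
  rw [show x * g.Δ ^ k * g.Δ ^ (-k) = x by group] at this
  omega

lemma ginf_inv (x : G) : g.ginf x⁻¹ = -g.gsup x := by
  refine le_antisymm ?_ ?_
  · have h1 := g.ginf_dvd x⁻¹
    have h2 : x⁻¹ * g.Δ ^ (-g.ginf x⁻¹) ∈ g.P := by
      have he : x⁻¹ * g.Δ ^ (-g.ginf x⁻¹)
          = g.Δ ^ (g.ginf x⁻¹) * ((g.Δ ^ (g.ginf x⁻¹))⁻¹ * x⁻¹) * g.Δ ^ (-(g.ginf x⁻¹)) := by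
        group
      rw [he]
      exact g.conj_mem (g.ginf x⁻¹) h1
    have := g.gsup_min x _ h2
    omega
  · apply g.ginf_max
    have he : (g.Δ ^ (-g.gsup x))⁻¹ * x⁻¹
        = g.Δ ^ (g.gsup x) * (x⁻¹ * g.Δ ^ g.gsup x) * g.Δ ^ (-(g.gsup x)) := by group
    rw [he]
    exact g.conj_mem (g.gsup x) (g.gsup_dvd x)

lemma gsup_inv (x : G) : g.gsup x⁻¹ = -g.ginf x := by
  have := g.ginf_inv x⁻¹
  rw [inv_inv] at this
  omega

lemma ginf_one : g.ginf (1 : G) = 0 := by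
  refine le_antisymm ?_ g.ginf_one_nonneg
  by_contra h
  have h1 : (g.Δ ^ g.ginf (1:G))⁻¹ * 1 ∈ g.P := g.ginf_dvd 1
  have h2 : g.Δ ^ g.ginf (1:G) ∈ g.P := g.delta_zpow_mem (by omega)
  have := g.eq_one_of_unit h2 (by simpa using h1)
  have := g.delta_zpow_eq_one this
  omega

lemma gsup_one : g.gsup (1 : G) = 0 := by
  have := g.ginf_inv (1 : G)
  rw [inv_one, g.ginf_one] at this
  omega

/-! ### the head lemma and left-weighted pairs -/

lemma exists_head {x y c : G} (hx : g.Simple x) (hy : y ∈ g.P)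
    (hc : g.LDvd c g.Δ) (hcxy : g.LDvd c (x * y)) :
    ∃ u, u ∈ g.P ∧ g.LDvd u (x⁻¹ * g.Δ) ∧ g.LDvd u y ∧ g.LDvd c (x * u) := by
  obtain ⟨m, h1, h2, h3⟩ := g.llcm_exists x c
  refine ⟨x⁻¹ * m, h1, ?_, ?_, ?_⟩
  · have hm : m⁻¹ * g.Δ ∈ g.P := h3 g.Δ hx.2 hc
    unfold LDvd
    rw [show (x⁻¹ * m)⁻¹ * (x⁻¹ * g.Δ) = m⁻¹ * g.Δ by group]
    exact hm
  · have hm : m⁻¹ * (x * y) ∈ g.P := h3 (x * y) (by simpa [mul_assoc] using hy) hcxy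
    unfold LDvd
    rw [show (x⁻¹ * m)⁻¹ * y = m⁻¹ * (x * y) by group]
    exact hm
  · unfold LDvd
    rw [show c⁻¹ * (x * (x⁻¹ * m)) = c⁻¹ * m by group]
    exact h2

lemma ldvd_delta_of_comp {u x : G} (hu : g.LDvd u (x⁻¹ * g.Δ)) (hx : x ∈ g.P) :
    g.LDvd u g.Δ := by
  have h1 : g.Δ⁻¹ * x * g.Δ ∈ g.P := g.tau_one_mem hx
  have := mul_mem hu h1
  have he : u⁻¹ * (x⁻¹ * g.Δ) * (g.Δ⁻¹ * x * g.Δ) = u⁻¹ * g.Δ := by group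
  rwa [he] at this

/-- a left-weighted pair -/
def LW (x z : G) : Prop := ∀ c : G, g.LDvd c g.Δ → g.LDvd c (x * z) → g.LDvd c x

lemma lw_of_triv {x z : G} (hx : g.Simple x) (hz : z ∈ g.P)
    (h : ∀ e, e ∈ g.P → g.LDvd e (x⁻¹ * g.Δ) → g.LDvd e z → e = 1) : g.LW x z := by
  intro c hc hcxz
  obtain ⟨u, huP, hux, huz, hcxu⟩ := g.exists_head hx hz hc hcxz
  have hu1 : u = 1 := h u huP hux huz
  rw [hu1, mul_one] at hcxu
  exact hcxu

lemma triv_of_lw {x z : G} (hxP : x ∈ g.P) (h : g.LW x z) :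
    ∀ e, e ∈ g.P → g.LDvd e (x⁻¹ * g.Δ) → g.LDvd e z → e = 1 := by
  intro e heP he hez
  have hc : g.LDvd (x * e) g.Δ := by
    unfold LDvd
    rw [show (x * e)⁻¹ * g.Δ = e⁻¹ * (x⁻¹ * g.Δ) by group]
    exact he
  have hcx : g.LDvd (x * e) (x * z) := by
    unfold LDvd
    rw [show (x * e)⁻¹ * (x * z) = e⁻¹ * z by group]
    exact hez
  have h2 := h (x * e) hc hcx
  have h3 : e⁻¹ ∈ g.P := by
    have he2 : (x * e)⁻¹ * x = e⁻¹ := by group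
    exact he2 ▸ h2
  exact g.eq_one_of_unit heP h3

lemma prod_mem_of_simple {l : List G} (hs : ∀ s ∈ l, g.Simple s) : l.prod ∈ g.P :=
  Submonoid.list_prod_mem _ fun x hx => (hs x hx).1

lemma chain_head {l : List G} (hs : ∀ s ∈ l, g.Simple s) (hc : l.Chain' g.LW) :
    ∀ c, g.LDvd c g.Δ → g.LDvd c l.prod → ∀ x ∈ l.head?, g.LDvd c x := by
  induction l with
  | nil => simp
  | cons x t ih =>
    intro c hcd hcp y hy
    simp only [List.head?_cons, Option.mem_def, Option.some.injEq] at hy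
    subst hy
    have hxs : g.Simple x := hs x (by simp)
    have htP : t.prod ∈ g.P := g.prod_mem_of_simple (fun s h => hs s (by simp [h]))
    obtain ⟨u, huP, hux, hut, hcxu⟩ := g.exists_head hxs htP hcd (by
      simpa only [List.prod_cons] using hcp)
    cases t with
    | nil =>
      have : u = 1 := g.eq_one_of_unit huP (by simpa [LDvd] using hut)
      rw [this, mul_one] at hcxu
      exact hcxu
    | cons x' t' =>
      obtain ⟨hlw, hc'⟩ := List.isChain_cons_cons.mp hc
      have hud : g.LDvd u g.Δ := g.ldvd_delta_of_comp hux hxs.1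
      have hux' : g.LDvd u x' :=
        ih (fun s h => hs s (by simp [List.mem_cons] at h ⊢; tauto)) hc' u hud hut x' (by simp)
      have hcxx' : g.LDvd c (x * x') := by
        have h2 := mul_mem hcxu hux'
        have he : c⁻¹ * (x * u) * (u⁻¹ * x') = c⁻¹ * (x * x') := by group
        rwa [he] at h2
      exact hlw c hcd hcxx'

/-! ### left normal forms -/

lemma isLNF_of_chain {l : List G} (hs : ∀ s ∈ l, g.Simple s ∧ s ≠ 1 ∧ s ≠ g.Δ)
    (hc : l.Chain' g.LW) : g.IsLNF l := by
  refine ⟨hs, ?_⟩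
  intro i h c hcd hcp
  have hdrop : l.drop i = l.get ⟨i, h⟩ :: l.drop (i + 1) := by
    rw [List.get_eq_getElem, List.drop_eq_getElem_cons h]
  have := g.chain_head (l := l.drop i)
    (fun s h' => (hs s (List.mem_of_mem_drop h')).1) (hc.drop i) c hcd hcp (l.get ⟨i, h⟩)
    (by rw [hdrop]; simp)
  exact this

lemma chain_of_isLNF {l : List G} (h : g.IsLNF l) : l.Chain' g.LW := by
  show List.IsChain g.LW l
  rw [List.isChain_iff_getElem]
  intro i hi
  have hi1 : i < l.length := by omega
  have hi2 : i + 1 < l.length := by omega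
  intro c hcd hcp
  apply h.2 i hi1 c hcd
  have hP : (l.drop (i + 2)).prod ∈ g.P :=
    g.prod_mem_of_simple (fun s h' => (h.1 s (List.mem_of_mem_drop h')).1)
  have hdrop : (l.drop i).prod = l.get ⟨i, hi1⟩ * l.get ⟨i + 1, hi2⟩ * (l.drop (i + 2)).prod := by
    rw [List.get_eq_getElem, List.get_eq_getElem, List.drop_eq_getElem_cons hi1,
      List.drop_eq_getElem_cons hi2, List.prod_cons, List.prod_cons, mul_assoc]
  unfold LDvd
  rw [hdrop]
  exact g.ldvd_mul_right hcp hP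

lemma isLNF_tail {x : G} {t : List G} (h : g.IsLNF (x :: t)) : g.IsLNF t := by
  refine ⟨fun s hs => h.1 s (List.mem_cons_of_mem x hs), ?_⟩
  intro i hi c h1 h2
  have := h.2 (i + 1) (by simpa using Nat.succ_lt_succ hi) c h1 (by simpa using h2)
  simpa using this

lemma isLNF_head_prod_ne_one {x : G} {t : List G} (h : g.IsLNF (x :: t))
    (hp : (x :: t).prod = 1) : False := by
  have hxP : x ∈ g.P := (h.1 x (by simp)).1.1
  have htP : t.prod ∈ g.P := g.prod_mem_of_simple (fun s hs => (h.1 s (by simp [hs])).1)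
  have h2 : x⁻¹ ∈ g.P := by
    have : x * t.prod = 1 := by simpa using hp
    have : t.prod = x⁻¹ := by
      have := congrArg (x⁻¹ * ·) this
      simpa [mul_assoc] using this
    rwa [this] at htP
  exact (h.1 x (by simp)).2.1 (g.eq_one_of_unit hxP h2)

lemma isLNF_unique {l l' : List G} (h : g.IsLNF l) (h' : g.IsLNF l') (hp : l.prod = l'.prod) :
    l = l' := by
  induction l generalizing l' with
  | nil =>
    cases l' with
    | nil => rfl
    | cons x t =>
      exfalso
      exact g.isLNF_head_prod_ne_one h' (by rw [← hp]; simp)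
  | cons x t ih =>
    cases l' with
    | nil =>
      exfalso
      exact g.isLNF_head_prod_ne_one h (by rw [hp]; simp)
    | cons x' t' =>
      have hx'd : g.LDvd x' g.Δ := (h'.1 x' (by simp)).1.2
      have hxd : g.LDvd x g.Δ := (h.1 x (by simp)).1.2
      have hx'p : g.LDvd x' (x :: t).prod := by
        rw [hp]
        simp only [List.prod_cons]
        unfold LDvd
        rw [← mul_assoc]
        simpa using g.prod_mem_of_simple (fun s hs => (h'.1 s (by simp [hs])).1)
      have hxp : g.LDvd x (x' :: t').prod := by
        rw [← hp]
        simp only [List.prod_cons]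
        unfold LDvd
        rw [← mul_assoc]
        simpa using g.prod_mem_of_simple (fun s hs => (h.1 s (by simp [hs])).1)
      have h1 : g.LDvd x' x := by
        have := h.2 0 (by simp) x' hx'd (by simpa using hx'p)
        simpa using this
      have h2 : g.LDvd x x' := by
        have := h'.2 0 (by simp) x hxd (by simpa using hxp)
        simpa using this
      have hxx : x = x' := g.ldvd_antisymm h2 h1
      subst hxx
      have hpt : t.prod = t'.prod := by
        have := hp
        simp only [List.prod_cons] at this
        exact mul_left_cancel this
      rw [ih (g.isLNF_tail h) (g.isLNF_tail h') hpt]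

/-! ### transport of normal forms by tau -/

lemma lw_tau (k : ℤ) {a b : G} (h : g.LW a b) : g.LW (g.tau k a) (g.tau k b) := by
  intro c hcd hcp
  have h1 : g.LDvd (g.tau (-k) c) g.Δ := by
    have := (g.tau_ldvd_iff (-k) (u := c) (v := g.Δ)).mpr hcd
    rwa [g.tau_delta] at this
  have h2 : g.LDvd (g.tau (-k) c) (a * b) := by
    have hcp' : g.LDvd c (g.tau k (a * b)) := by rwa [g.tau_mul]
    have := (g.tau_ldvd_iff (-k)).mpr hcp'
    rwa [g.tau_tau, add_neg_cancel, g.tau_zero] at this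
  have h3 := h _ h1 h2
  have := (g.tau_ldvd_iff k).mpr h3
  rwa [g.tau_tau, neg_add_cancel, g.tau_zero] at this

lemma simple_facts_tau (k : ℤ) {s : G} (hs : g.Simple s ∧ s ≠ 1 ∧ s ≠ g.Δ) :
    g.Simple (g.tau k s) ∧ g.tau k s ≠ 1 ∧ g.tau k s ≠ g.Δ := by
  refine ⟨g.tau_simple k hs.1, ?_, ?_⟩
  · intro h; exact hs.2.1 (g.tau_eq_one_iff.mp h)
  · intro h; exact hs.2.2 (g.tau_inj (k := k) (by rw [h, g.tau_delta]))

lemma prod_map_tau (k : ℤ) (l : List G) : (l.map (g.tau k)).prod = g.tau k l.prod := by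
  induction l with
  | nil => simp [g.tau_one]
  | cons x t ih => simp [ih, g.tau_mul]

/-! ### the dual list and sup = length -/

/-- the reversed list of right complements, used to compute `sup` of a normal form -/
def dualL : List G → List G
  | [] => []
  | x :: t => dualL t ++ [g.tau (t.length : ℤ) (x⁻¹ * g.Δ)]

lemma dualL_nil : g.dualL [] = [] := rfl

lemma dualL_cons (x : G) (t : List G) :
    g.dualL (x :: t) = g.dualL t ++ [g.tau (t.length : ℤ) (x⁻¹ * g.Δ)] := rfl

lemma dualL_prod (l : List G) : (g.dualL l).prod = l.prod⁻¹ * g.Δ ^ (l.length : ℤ) := by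
  induction l with
  | nil => simp [dualL_nil]
  | cons x t ih =>
    rw [g.dualL_cons, List.prod_append, ih, List.prod_singleton]
    unfold tau
    simp only [List.prod_cons, List.length_cons]
    push_cast
    group

lemma dualL_simple {l : List G} (hs : ∀ s ∈ l, g.Simple s ∧ s ≠ 1 ∧ s ≠ g.Δ) :
    ∀ s ∈ g.dualL l, g.Simple s ∧ s ≠ 1 ∧ s ≠ g.Δ := by
  induction l with
  | nil => simp [dualL_nil]
  | cons x t ih =>
    intro s hmem
    rw [g.dualL_cons, List.mem_append] at hmem
    rcases hmem with hmem | hmem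
    · exact ih (fun s' h' => hs s' (by simp [h'])) s hmem
    · simp only [List.mem_singleton] at hmem
      subst hmem
      obtain ⟨⟨hxP, hxd⟩, hx1, hxD⟩ := hs x (by simp)
      apply g.simple_facts_tau
      refine ⟨⟨hxd, ?_⟩, ?_, ?_⟩
      · unfold LDvd
        rw [show (x⁻¹ * g.Δ)⁻¹ * g.Δ = g.Δ⁻¹ * x * g.Δ by group]
        exact g.tau_one_mem hxP
      · intro h
        exact hxD (by have := congrArg (x * ·) h; simpa [mul_assoc] using this.symm)
      · intro h
        exact hx1 (by have := congrArg (· * g.Δ⁻¹) h; simpa [mul_assoc] using this)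

lemma dualL_chain {l : List G} (hs : ∀ s ∈ l, g.Simple s ∧ s ≠ 1 ∧ s ≠ g.Δ)
    (hc : l.Chain' g.LW) : (g.dualL l).Chain' g.LW := by
  induction l with
  | nil => exact List.IsChain.nil
  | cons x t ih =>
    show List.IsChain g.LW (g.dualL (x :: t))
    rw [g.dualL_cons, List.isChain_append]
    refine ⟨ih (fun s' h' => hs s' (by simp [h'])) ((List.isChain_cons.mp hc).2), by simp, ?_⟩
    intro p hp q hq
    simp only [List.head?_cons, Option.mem_def, Option.some.injEq] at hq
    subst hq
    cases t with
    | nil => simp [dualL_nil] at hp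
    | cons x' t' =>
      rw [g.dualL_cons, List.getLast?_concat] at hp
      simp only [Option.mem_def, Option.some.injEq] at hp
      subst hp
      have hlen : ((x' :: t').length : ℤ) = (t'.length : ℤ) + 1 := by
        push_cast [List.length_cons]
        ring
      rw [hlen, show g.tau ((t'.length : ℤ) + 1) (x⁻¹ * g.Δ)
          = g.tau (t'.length : ℤ) (g.tau 1 (x⁻¹ * g.Δ)) by rw [g.tau_tau, add_comm]]
      apply g.lw_tau
      -- goal : LW (x'⁻¹ Δ) (tau 1 (x⁻¹ Δ))
      obtain ⟨⟨hxP, hxd⟩, hx1, hxD⟩ := hs x (by simp)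
      obtain ⟨⟨hx'P, hx'd⟩, hx'1, hx'D⟩ := hs x' (by simp)
      have hsimple : g.Simple (x'⁻¹ * g.Δ) := by
        refine ⟨hx'd, ?_⟩
        unfold LDvd
        rw [show (x'⁻¹ * g.Δ)⁻¹ * g.Δ = g.Δ⁻¹ * x' * g.Δ by group]
        exact g.tau_one_mem hx'P
      have hzP : g.tau 1 (x⁻¹ * g.Δ) ∈ g.P := g.tau_mem 1 hxd
      apply g.lw_of_triv hsimple hzP
      intro e heP he1 he2
      -- e ≼ (x'⁻¹Δ)⁻¹Δ = τ(x') and e ≼ τ(x⁻¹Δ)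
      have he1' : g.LDvd e (g.tau 1 x') := by
        have hkey : (x'⁻¹ * g.Δ)⁻¹ * g.Δ = g.tau 1 x' := by unfold tau; group
        rwa [hkey] at he1
      have he0P : g.tau (-1) e ∈ g.P := g.tau_mem (-1) heP
      have he0x' : g.LDvd (g.tau (-1) e) x' := by
        have h5 := (g.tau_ldvd_iff (-1)).mpr he1'
        rwa [g.tau_cancel] at h5
      have he0xd : g.LDvd (g.tau (-1) e) (x⁻¹ * g.Δ) := by
        have h5 := (g.tau_ldvd_iff (-1)).mpr he2
        rwa [g.tau_cancel] at h5
      have hLW : g.LW x x' := (List.isChain_cons_cons.mp hc).1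
      have he0 : g.tau (-1) e = 1 := g.triv_of_lw hxP hLW _ he0P he0xd he0x'
      have : e = 1 := by
        have h6 := congrArg (g.tau 1) he0
        rwa [g.tau_cancel', g.tau_one] at h6
      exact this

lemma isLNF_ginf {l : List G} (h : g.IsLNF l) : g.ginf l.prod = 0 := by
  refine le_antisymm ?_ (g.ginf_nonneg (g.prod_mem_of_simple (fun s hs => (h.1 s hs).1)))
  by_contra hlt
  have hd : g.LDvd g.Δ l.prod := by
    have := g.ginf_le_dvd l.prod (r := 1) (by omega)
    unfold LDvd
    rwa [zpow_one] at this
  cases l with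
  | nil =>
    have h1 : g.Δ⁻¹ ∈ g.P := by simpa [LDvd] using hd
    have h2 : g.Δ = 1 := g.eq_one_of_unit g.delta_pos h1
    have := g.delta_zpow_eq_one (m := 1) (by simpa using h2)
    omega
  | cons y t =>
    have h3 := h.2 0 (by simp) g.Δ
      (by unfold LDvd; rw [inv_mul_cancel]; exact g.P.one_mem)
      (by simpa using hd)
    simp only [List.get] at h3
    have hy := h.1 y (by simp)
    exact hy.2.2 (g.ldvd_antisymm hy.1.2 h3)

lemma gsup_eq_length {l : List G} (h : g.IsLNF l) : g.gsup l.prod = (l.length : ℤ) := by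
  have hM : g.IsLNF (g.dualL l) :=
    g.isLNF_of_chain (g.dualL_simple h.1) (g.dualL_chain h.1 (g.chain_of_isLNF h))
  have h0 : g.ginf (g.dualL l).prod = 0 := g.isLNF_ginf hM
  rw [g.dualL_prod, g.ginf_mul_zpow, g.ginf_inv] at h0
  omega

lemma prod_ldvd_delta_pow {l : List G} (hs : ∀ s ∈ l, g.Simple s) :
    l.prod⁻¹ * g.Δ ^ (l.length : ℤ) ∈ g.P := by
  induction l with
  | nil => simpa using g.P.one_mem
  | cons x t ih =>
    have hx := hs x (by simp)
    have ihr := ih (fun s h => hs s (by simp [h]))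
    have he : (x :: t).prod⁻¹ * g.Δ ^ (((x :: t).length : ℤ))
        = (t.prod⁻¹ * g.Δ ^ (t.length : ℤ)) * g.tau (t.length : ℤ) (x⁻¹ * g.Δ) := by
      unfold tau
      simp only [List.prod_cons, List.length_cons]
      push_cast
      group
    rw [he]
    exact mul_mem ihr (g.tau_mem _ hx.2)

lemma vtx_mul_zpow (x : G) (k : ℤ) : g.vtx (x * g.Δ ^ k) = g.vtx x := by
  show QuotientGroup.mk _ = QuotientGroup.mk _
  rw [QuotientGroup.eq]
  rw [show (x * g.Δ ^ k)⁻¹ * x = g.Δ ^ (-k) by group]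
  exact Subgroup.mem_zpowers_iff.mpr ⟨-k, rfl⟩

end GarsideGroup

/-- Lemma 2.9: the preferred path `A(v,w)` is the concatenation of
`A(v, (v̄ ∧ w̄)Δ^ℤ)` and `A((v̄ ∧ w̄)Δ^ℤ, w)`; in particular it passes through the vertex
`(v̄ ∧ w̄)Δ^ℤ`. -/
theorem GarsideGroup.prefPath_through_gcd {G : Type*} [Group G] (g : GarsideGroup G)
    (v w : GarsideGroup.Vertex g) (l lvd ldw : List G)
    (hl : g.IsPrefPath v w l)
    (hlvd : g.IsPrefPath v (g.vtx (g.lgcd (g.rep v) (g.rep w))) lvd)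
    (hldw : g.IsPrefPath (g.vtx (g.lgcd (g.rep v) (g.rep w))) w ldw) :
    g.pathVertices v l =
      g.pathVertices v lvd ++
        (g.pathVertices (g.vtx (g.lgcd (g.rep v) (g.rep w))) ldw).tail ∧
    g.vtx (g.lgcd (g.rep v) (g.rep w)) ∈ g.pathVertices v l := by
  obtain ⟨hlN, hlprod⟩ := hl
  obtain ⟨hvdN, hvdprod⟩ := hlvd
  obtain ⟨hdwN, hdwprod⟩ := hldw
  set V := g.rep v with hV
  set W := g.rep w with hW
  set D := g.lgcd V W with hD
  have hVinf : g.ginf V = 0 := by rw [hV]; exact g.rep_inf v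
  have hWinf : g.ginf W = 0 := by rw [hW]; exact g.rep_inf w
  have hVP : V ∈ g.P := by
    have h1 := g.ginf_dvd V
    rwa [hVinf, zpow_zero, inv_one, one_mul] at h1
  have hWP : W ∈ g.P := by
    have h1 := g.ginf_dvd W
    rwa [hWinf, zpow_zero, inv_one, one_mul] at h1
  have hDP : D ∈ g.P := by
    have h1 := g.lgcd_greatest V W 1 (by simpa using hVP) (by simpa using hWP)
    rw [← hD] at h1
    simpa using h1
  have haP : (D⁻¹ * V) ∈ g.P := by have := g.lgcd_dvd_left V W; rwa [← hD] at this
  have hbP : (D⁻¹ * W) ∈ g.P := by have := g.lgcd_dvd_right V W; rwa [← hD] at this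
  have hDinf : g.ginf D = 0 := by
    refine le_antisymm ?_ (g.ginf_nonneg hDP)
    have h1 : (g.Δ ^ g.ginf D)⁻¹ * V ∈ g.P := by
      have h2 := mul_mem (g.ginf_dvd D) haP
      rwa [show (g.Δ ^ g.ginf D)⁻¹ * D * (D⁻¹ * V) = (g.Δ ^ g.ginf D)⁻¹ * V by group] at h2
    have := g.ginf_max V _ h1
    omega
  have hrepD : g.rep (g.vtx D) = D := g.rep_eq D hDinf
  have hainf : g.ginf (D⁻¹ * V) = 0 := by
    refine le_antisymm ?_ (g.ginf_nonneg haP)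
    by_contra hlt
    have h1 : (g.Δ ^ (1:ℤ))⁻¹ * (D⁻¹ * V) ∈ g.P := g.ginf_le_dvd _ (by omega)
    have h2 : (g.Δ ^ (1:ℤ))⁻¹ * V ∈ g.P := by
      have h3 := mul_mem (g.tau_mem 1 hDP) h1
      rwa [show g.tau 1 D * ((g.Δ ^ (1:ℤ))⁻¹ * (D⁻¹ * V)) = (g.Δ ^ (1:ℤ))⁻¹ * V by
        unfold tau; group] at h3
    have := g.ginf_max V 1 h2
    omega
  have hbinf : g.ginf (D⁻¹ * W) = 0 := by
    refine le_antisymm ?_ (g.ginf_nonneg hbP)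
    by_contra hlt
    have h1 : (g.Δ ^ (1:ℤ))⁻¹ * (D⁻¹ * W) ∈ g.P := g.ginf_le_dvd _ (by omega)
    have h2 : (g.Δ ^ (1:ℤ))⁻¹ * W ∈ g.P := by
      have h3 := mul_mem (g.tau_mem 1 hDP) h1
      rwa [show g.tau 1 D * ((g.Δ ^ (1:ℤ))⁻¹ * (D⁻¹ * W)) = (g.Δ ^ (1:ℤ))⁻¹ * W by
        unfold tau; group] at h3
    have := g.ginf_max W 1 h2
    omega
  have hldwprod : ldw.prod = D⁻¹ * W := by
    rw [hdwprod]
    show g.rep (g.vtx ((g.rep (g.vtx D))⁻¹ * g.rep w)) = D⁻¹ * W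
    rw [hrepD, ← hW]
    exact g.rep_eq _ hbinf
  -- the coset of lvd.prod
  obtain ⟨k, hk⟩ : ∃ k : ℤ, (D⁻¹ * V)⁻¹ * g.Δ ^ k = lvd.prod := by
    have h1 : QuotientGroup.mk (s := Subgroup.zpowers g.Δ) lvd.prod = g.vtx (V⁻¹ * D) := by
      rw [hvdprod]
      show QuotientGroup.mk (g.rep (g.vtx ((g.rep v)⁻¹ * g.rep (g.vtx D)))) = _
      rw [hrepD, ← hV]
      exact g.rep_mem _
    have h2 : (V⁻¹ * D)⁻¹ * lvd.prod ∈ Subgroup.zpowers g.Δ := by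
      have h3 : g.vtx (V⁻¹ * D) = QuotientGroup.mk (s := Subgroup.zpowers g.Δ) lvd.prod :=
        h1.symm
      exact QuotientGroup.eq.mp h3
    obtain ⟨k, hk⟩ := Subgroup.mem_zpowers_iff.mp h2
    refine ⟨k, ?_⟩
    rw [show (D⁻¹ * V)⁻¹ * g.Δ ^ k = (V⁻¹ * D) * g.Δ ^ k by group, hk]
    group
  have hkval : (lvd.length : ℤ) = k := by
    have h1 := g.gsup_eq_length hvdN
    rw [← hk, g.gsup_mul_zpow, g.gsup_inv, hainf] at h1
    omega
  -- the concatenated list is a left normal form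
  have hmapN : ∀ s ∈ ldw.map (g.tau k), g.Simple s ∧ s ≠ 1 ∧ s ≠ g.Δ := by
    intro s hs
    rw [List.mem_map] at hs
    obtain ⟨x, hx, rfl⟩ := hs
    exact g.simple_facts_tau k (hdwN.1 x hx)
  have hLall : ∀ s ∈ lvd ++ ldw.map (g.tau k), g.Simple s ∧ s ≠ 1 ∧ s ≠ g.Δ := by
    intro s hs
    rcases List.mem_append.mp hs with h | h
    · exact hvdN.1 s h
    · exact hmapN s h
  have hchain : (lvd ++ ldw.map (g.tau k)).Chain' g.LW := by
    show List.IsChain g.LW (lvd ++ ldw.map (g.tau k))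
    rw [List.isChain_append]
    refine ⟨g.chain_of_isLNF hvdN, ?_, ?_⟩
    · rw [List.isChain_map]
      exact (g.chain_of_isLNF hdwN).imp (fun a b h => g.lw_tau k h)
    · intro p hp q hq
      cases hldweq : ldw with
      | nil => rw [hldweq] at hq; simp at hq
      | cons b1 tl =>
        rw [hldweq] at hq
        simp only [List.map_cons, List.head?_cons, Option.mem_def, Option.some.injEq] at hq
        subst hq
        have hlvdne : lvd ≠ [] := by
          intro h0
          rw [h0] at hp
          simp at hp
        rw [List.getLast?_eq_getLast hlvdne] at hp
        simp only [Option.mem_def, Option.some.injEq] at hp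
        subst hp
        have hxr := hvdN.1 (lvd.getLast hlvdne) (List.getLast_mem hlvdne)
        have hb1 := hdwN.1 b1 (by rw [hldweq]; simp)
        apply g.lw_of_triv hxr.1 (g.tau_mem k hb1.1.1)
        intro e heP he1 he2
        have hfP : g.tau (-k) e ∈ g.P := g.tau_mem (-k) heP
        have hfb1 : g.LDvd (g.tau (-k) e) b1 := by
          have h5 := (g.tau_ldvd_iff (-k)).mpr he2
          rwa [g.tau_cancel] at h5
        have hfb : g.LDvd (g.tau (-k) e) (D⁻¹ * W) := by
          apply g.ldvd_trans hfb1
          have h6 : b1⁻¹ * (D⁻¹ * W) = tl.prod := by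
            rw [← hldwprod, hldweq, List.prod_cons]
            group
          unfold LDvd
          rw [h6]
          exact g.prod_mem_of_simple (fun s hs => (hdwN.1 s (by rw [hldweq]; simp [hs])).1)
        -- the complement of the last factor of lvd, conjugated back, divides D⁻¹V
        have hyd : (lvd.dropLast).prod⁻¹ * g.Δ ^ ((lvd.dropLast).length : ℤ) ∈ g.P :=
          g.prod_ldvd_delta_pow (fun s hs => (hvdN.1 s (List.dropLast_subset lvd hs)).1)
        have hlvdpos : 1 ≤ lvd.length := List.length_pos_iff.mpr hlvdne
        have hlend : ((lvd.dropLast).length : ℤ) = k - 1 := by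
          rw [List.length_dropLast, Nat.cast_sub hlvdpos]
          omega
        have hyd' : (lvd.dropLast).prod⁻¹ * g.Δ ^ (k - 1) ∈ g.P := by
          rw [← hlend]
          exact hyd
        have hyr : g.Δ ^ (k - 1) * (lvd.dropLast).prod⁻¹ ∈ g.P := by
          have h7 := g.conj_mem (k - 1) hyd'
          rwa [show g.Δ ^ (k-1) * ((lvd.dropLast).prod⁻¹ * g.Δ ^ (k-1)) * g.Δ ^ (-(k-1))
              = g.Δ ^ (k-1) * (lvd.dropLast).prod⁻¹ by group] at h7
        have hsplit : (lvd.dropLast).prod * (lvd.getLast hlvdne) = lvd.prod := by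
          conv_rhs => rw [← List.dropLast_append_getLast hlvdne]
          rw [List.prod_append, List.prod_singleton]
        have h8 : D⁻¹ * V = g.Δ ^ k * lvd.prod⁻¹ := by
          rw [← hk]
          group
        have hkey : (g.tau (-k) ((lvd.getLast hlvdne)⁻¹ * g.Δ))⁻¹ * (D⁻¹ * V)
            = g.Δ ^ (k - 1) * (lvd.dropLast).prod⁻¹ := by
          rw [h8, ← hsplit]
          unfold tau
          group
        have hcomp : g.LDvd (g.tau (-k) ((lvd.getLast hlvdne)⁻¹ * g.Δ)) (D⁻¹ * V) := by
          unfold LDvd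
          rw [hkey]
          exact hyr
        have hfxr : g.LDvd (g.tau (-k) e) (g.tau (-k) ((lvd.getLast hlvdne)⁻¹ * g.Δ)) :=
          (g.tau_ldvd_iff (-k)).mpr he1
        have hfa : g.LDvd (g.tau (-k) e) (D⁻¹ * V) := g.ldvd_trans hfxr hcomp
        have hf1 : g.tau (-k) e = 1 := by
          apply g.eq_one_of_unit hfP
          have h9 := g.lgcd_greatest V W (D * g.tau (-k) e) ?_ ?_
          · rw [← hD, show (D * g.tau (-k) e)⁻¹ * D = (g.tau (-k) e)⁻¹ by group] at h9
            exact h9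
          · rw [show (D * g.tau (-k) e)⁻¹ * V = (g.tau (-k) e)⁻¹ * (D⁻¹ * V) by group]
            exact hfa
          · rw [show (D * g.tau (-k) e)⁻¹ * W = (g.tau (-k) e)⁻¹ * (D⁻¹ * W) by group]
            exact hfb
        have h10 := congrArg (g.tau k) hf1
        rwa [g.tau_cancel', g.tau_one] at h10
  have hLlnf : g.IsLNF (lvd ++ ldw.map (g.tau k)) := g.isLNF_of_chain hLall hchain
  have hprodL : (lvd ++ ldw.map (g.tau k)).prod = V⁻¹ * W * g.Δ ^ k := by
    rw [List.prod_append, g.prod_map_tau, hldwprod, ← hk]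
    unfold tau
    group
  have hleq : l = lvd ++ ldw.map (g.tau k) := by
    apply g.isLNF_unique hlN hLlnf
    rw [hlprod, hprodL]
    show g.rep (g.vtx ((g.rep v)⁻¹ * g.rep w)) = V⁻¹ * W * g.Δ ^ k
    rw [← hV, ← hW]
    have hmk : g.vtx (V⁻¹ * W)
        = QuotientGroup.mk (s := Subgroup.zpowers g.Δ) (V⁻¹ * W * g.Δ ^ k) :=
      (g.vtx_mul_zpow (V⁻¹ * W) k).symm
    rw [hmk]
    apply g.rep_eq
    rw [← hprodL]
    exact g.isLNF_ginf hLlnf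
  subst hleq
  constructor
  · -- the concatenation of the paths
    unfold pathVertices
    rw [hrepD, ← hV]
    rw [List.range_succ_eq_map (n := ldw.length), List.map_cons, List.tail_cons, List.map_map]
    apply List.ext_getElem
    · simp only [List.length_append, List.length_map, List.length_range]
      omega
    · intro n h1 h2
      simp only [List.length_map, List.length_range] at h1 h2
      rw [List.getElem_map, List.getElem_range]
      by_cases hn : n < lvd.length + 1
      · rw [List.getElem_append_left (by simpa using hn)]
        rw [List.getElem_map, List.getElem_range]
        rw [List.take_append_of_le_length (by omega : n ≤ lvd.length)]
      · rw [List.getElem_append_right (by simpa using hn)]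
        simp only [List.length_map, List.length_range]
        rw [List.getElem_map, List.getElem_range]
        -- n = lvd.length + 1 + j with j = n - (lvd.length + 1)
        have hjn : n = lvd.length + (n - (lvd.length + 1) + 1) := by omega
        rw [show ((lvd ++ ldw.map (g.tau k)).take n)
            = lvd ++ (ldw.map (g.tau k)).take (n - (lvd.length + 1) + 1) by
          conv_lhs => rw [hjn]
          exact List.take_length_add_append _]
        rw [List.prod_append, ← List.map_take, g.prod_map_tau]
        have hcompute : V * (lvd.prod * g.tau k (ldw.take (n - (lvd.length + 1) + 1)).prod)
            = D * (ldw.take (n - (lvd.length + 1) + 1)).prod * g.Δ ^ k := by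
          rw [← hk]
          unfold tau
          group
        rw [hcompute, g.vtx_mul_zpow]
        rfl
  · -- passes through the gcd vertex
    unfold pathVertices
    rw [← hV]
    refine List.mem_map.mpr ⟨lvd.length, ?_, ?_⟩
    · rw [List.mem_range, List.length_append]
      omega
    · rw [List.take_append_of_le_length (le_refl lvd.length), List.take_length]
      rw [← hk, show V * ((D⁻¹ * V)⁻¹ * g.Δ ^ k) = D * g.Δ ^ k by group]
      exact g.vtx_mul_zpow D k
end

section
/- Let (G,P,Δ) be a Garside group of finite type, let v, w be two vertices of the additional length complex C_AL(G) with distinguished representatives v̄, w̄, let d = v̄ ∧ w̄ and p = sup(d). Then for every 0 ≤ i ≤ p one has d_AL((v̄ ∧ Δ^i)Δ^ℤ, (d ∧ Δ^i)Δ^ℤ) ≤ 1 and d_AL((w̄ ∧ Δ^i)Δ^ℤ, (d ∧ Δ^i)Δ^ℤ) ≤ 1; consequently the initial segments of length p of the preferred paths A(1,v) and A(1,w) are at Hausdorff distance at most 2 in C_AL(G). -/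
namespace GarsideGroup

variable {G : Type*} [Group G] (g : GarsideGroup G)

lemma no_units {u : G} (hu : u ∈ g.P) (hu' : u⁻¹ ∈ g.P) : u = 1 := by
  by_contra h
  obtain ⟨N, hN⟩ := g.atomic 1 g.P.one_mem
  have := hN (List.replicate (N+1) u ++ List.replicate (N+1) u⁻¹) ?_ ?_
  · simp at this; omega
  · intro a ha
    rcases List.mem_append.1 ha with h1 | h1 <;> rw [List.eq_of_mem_replicate h1]
    · exact ⟨hu, h⟩
    · exact ⟨hu', by simpa using h⟩
  · simp [List.prod_replicate, inv_pow]

lemma zpow_mem' {k : ℤ} (hk : 0 ≤ k) : g.Δ ^ k ∈ g.P := by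
  obtain ⟨n, rfl⟩ := Int.eq_ofNat_of_zero_le hk
  rw [zpow_natCast]; exact pow_mem g.delta_pos n

lemma tau_mem' {p : G} (hp : p ∈ g.P) : g.Δ⁻¹ * p * g.Δ ∈ g.P := by
  have hcl := g.simples_generate p hp
  clear hp
  induction hcl using Submonoid.closure_induction with
  | mem s hs =>
      obtain ⟨hs1, hs2⟩ := hs
      have h3 : g.Δ * (s⁻¹ * g.Δ)⁻¹ ∈ g.P := by
        have e : g.Δ * (s⁻¹ * g.Δ)⁻¹ = s := by group
        rw [e]; exact hs1
      have h4 := ((g.simples_symm (s⁻¹ * g.Δ)).mpr ⟨hs2, h3⟩).2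
      have e2 : (s⁻¹ * g.Δ)⁻¹ * g.Δ = g.Δ⁻¹ * s * g.Δ := by group
      rw [e2] at h4; exact h4
  | one => simpa using g.P.one_mem
  | mul x y hx hy ihx ihy =>
      have e : g.Δ⁻¹ * (x * y) * g.Δ = (g.Δ⁻¹ * x * g.Δ) * (g.Δ⁻¹ * y * g.Δ) := by group
      rw [e]; exact mul_mem ihx ihy

lemma tau_inv_mem' {p : G} (hp : p ∈ g.P) : g.Δ * p * g.Δ⁻¹ ∈ g.P := by
  have hcl := g.simples_generate p hp
  clear hp
  induction hcl using Submonoid.closure_induction with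
  | mem s hs =>
      obtain ⟨hs1, hs2⟩ := hs
      have ht : g.Δ * s⁻¹ ∈ g.P := ((g.simples_symm s).mp ⟨hs1, hs2⟩).2
      have ht2 : (g.Δ * s⁻¹)⁻¹ * g.Δ ∈ g.P := by
        have e : (g.Δ * s⁻¹)⁻¹ * g.Δ = s := by group
        rw [e]; exact hs1
      have h4 := ((g.simples_symm (g.Δ * s⁻¹)).mp ⟨ht, ht2⟩).2
      have e2 : g.Δ * (g.Δ * s⁻¹)⁻¹ = g.Δ * s * g.Δ⁻¹ := by group
      rw [e2] at h4; exact h4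
  | one => simpa using g.P.one_mem
  | mul x y hx hy ihx ihy =>
      have e : g.Δ * (x * y) * g.Δ⁻¹ = (g.Δ * x * g.Δ⁻¹) * (g.Δ * y * g.Δ⁻¹) := by group
      rw [e]; exact mul_mem ihx ihy

lemma conj_pow_mem {q : G} (hq : q ∈ g.P) (n : ℕ) : g.Δ ^ n * q * (g.Δ ^ n)⁻¹ ∈ g.P := by
  induction n with
  | zero => simpa using hq
  | succ n ih =>
      have e : g.Δ ^ (n+1) * q * (g.Δ ^ (n+1))⁻¹
          = g.Δ * (g.Δ ^ n * q * (g.Δ ^ n)⁻¹) * g.Δ⁻¹ := by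
        rw [pow_succ']; group
      rw [e]; exact g.tau_inv_mem' ih

lemma conj_zpow_mem' {q : G} (hq : q ∈ g.P) {r : ℤ} (hr : 0 ≤ r) :
    g.Δ ^ r * q * g.Δ ^ (-r) ∈ g.P := by
  obtain ⟨n, rfl⟩ := Int.eq_ofNat_of_zero_le hr
  have := g.conj_pow_mem hq n
  simpa [zpow_natCast, zpow_neg] using this

lemma eq_one_of_no_simple_prefix {z : G} (hz : z ∈ g.P)
    (h : ∀ s : G, s ∈ g.P → s⁻¹ * g.Δ ∈ g.P → s⁻¹ * z ∈ g.P → s = 1) : z = 1 := by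
  have hcl := g.simples_generate z hz
  have key : z = 1 ∨ ∃ s : G, s ∈ g.P ∧ s⁻¹ * g.Δ ∈ g.P ∧ s ≠ 1 ∧ s⁻¹ * z ∈ g.P := by
    clear h hz
    induction hcl using Submonoid.closure_induction with
    | mem s hs =>
        by_cases h1 : s = 1
        · exact Or.inl h1
        · exact Or.inr ⟨s, hs.1, hs.2, h1, by simpa using g.P.one_mem⟩
    | one => exact Or.inl rfl
    | mul x y hx hy ihx ihy =>
        have hyP : y ∈ g.P :=
          (Submonoid.closure_le.mpr (fun s hs => hs.1) : _ ≤ g.P) hy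
        rcases ihx with rfl | ⟨s, h1, h2, h3, h4⟩
        · rw [one_mul]; exact ihy
        · refine Or.inr ⟨s, h1, h2, h3, ?_⟩
          have e : s⁻¹ * (x * y) = (s⁻¹ * x) * y := by group
          rw [e]; exact mul_mem h4 hyP
  rcases key with h1 | ⟨s, h1, h2, h3, h4⟩
  · exact h1
  · exact absurd (h s h1 h2 h4) h3

lemma pre_trans {a b c : G} (h1 : a⁻¹ * b ∈ g.P) (h2 : b⁻¹ * c ∈ g.P) : a⁻¹ * c ∈ g.P := by
  have e : a⁻¹ * c = (a⁻¹ * b) * (b⁻¹ * c) := by group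
  rw [e]; exact mul_mem h1 h2

lemma gsup_mono {a b : G} (h : a⁻¹ * b ∈ g.P) : g.gsup a ≤ g.gsup b :=
  g.gsup_min a _ (g.pre_trans h (g.gsup_dvd b))

lemma dpow_pre {m n : ℤ} (h : m ≤ n) : (g.Δ ^ m)⁻¹ * g.Δ ^ n ∈ g.P := by
  have e : (g.Δ ^ m)⁻¹ * g.Δ ^ n = g.Δ ^ (n - m) := by group
  rw [e]; exact g.zpow_mem' (by omega)

/-- the key normal-form fact: if `i ≤ sup d` then `sup (d ∧ Δ^i) ≥ i` -/
lemma gsup_lgcd_pow {d : G} {i : ℤ} (hip : i ≤ g.gsup d) :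
    i ≤ g.gsup (g.lgcd d (g.Δ ^ i)) := by
  set D := g.lgcd d (g.Δ ^ i) with hD
  by_contra hc
  push_neg at hc
  have hD1 : D⁻¹ * g.Δ ^ (i - 1) ∈ g.P :=
    g.pre_trans (g.gsup_dvd D) (g.dpow_pre (by omega))
  have hzP : D⁻¹ * d ∈ g.P := g.lgcd_dvd_left d _
  have hz1 : D⁻¹ * d = 1 := by
    apply g.eq_one_of_no_simple_prefix hzP
    intro s hs1 hs2 hs3
    have he : s⁻¹ * (D⁻¹ * g.Δ ^ i) ∈ g.P := by
      have e1 : s⁻¹ * (D⁻¹ * g.Δ ^ i)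
          = (s⁻¹ * g.Δ) * (g.Δ⁻¹ * (D⁻¹ * g.Δ ^ (i-1)) * g.Δ) := by group
      rw [e1]; exact mul_mem hs2 (g.tau_mem' hD1)
    have h1 : (D * s)⁻¹ * d ∈ g.P := by
      have e : (D * s)⁻¹ * d = s⁻¹ * (D⁻¹ * d) := by group
      rw [e]; exact hs3
    have h2 : (D * s)⁻¹ * g.Δ ^ i ∈ g.P := by
      have e : (D * s)⁻¹ * g.Δ ^ i = s⁻¹ * (D⁻¹ * g.Δ ^ i) := by group
      rw [e]; exact he
    have h3 := g.lgcd_greatest d (g.Δ ^ i) (D * s) h1 h2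
    have h4 : s⁻¹ ∈ g.P := by
      have e : s⁻¹ = (D * s)⁻¹ * D := by group
      rw [e, hD]; exact h3
    exact g.no_units hs1 h4
  have hd : d = D := by
    have e : d = D * (D⁻¹ * d) := by group
    rw [e, hz1, mul_one]
  rw [hd] at hip
  omega

/-- the core geometric step: the vertices `(a ∧ Δ^i)Δ^ℤ` and `(d ∧ Δ^i)Δ^ℤ` are equal
or adjacent, whenever `d ≼ a`, `inf a = 0`, `d` positive and `0 ≤ i ≤ sup d`. -/
lemma main_step (d a : G) (hdP : d ∈ g.P) (hda : d⁻¹ * a ∈ g.P) (ha : g.ginf a = 0)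
    {i : ℤ} (hi0 : 0 ≤ i) (hip : i ≤ g.gsup d) :
    g.vtx (g.lgcd a (g.Δ ^ i)) = g.vtx (g.lgcd d (g.Δ ^ i)) ∨
      g.calGraph.Adj (g.vtx (g.lgcd a (g.Δ ^ i))) (g.vtx (g.lgcd d (g.Δ ^ i))) := by
  set A := g.lgcd a (g.Δ ^ i) with hAdef
  set D := g.lgcd d (g.Δ ^ i) with hDdef
  have haP : a ∈ g.P := by
    have := g.ginf_dvd a; rw [ha] at this; simpa using this
  have hDa : D⁻¹ * a ∈ g.P := g.pre_trans (g.lgcd_dvd_left d _) hda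
  have hDA : D⁻¹ * A ∈ g.P := by
    rw [hAdef]; exact g.lgcd_greatest a (g.Δ ^ i) D hDa (g.lgcd_dvd_right d _)
  have hAP : A ∈ g.P := by
    have := g.lgcd_greatest a (g.Δ ^ i) 1 (by simpa using haP)
      (by simpa using g.zpow_mem' hi0)
    rw [← hAdef] at this; simpa using this
  have hDP : D ∈ g.P := by
    have := g.lgcd_greatest d (g.Δ ^ i) 1 (by simpa using hdP)
      (by simpa using g.zpow_mem' hi0)
    rw [← hDdef] at this; simpa using this
  have hinfA : g.ginf A = 0 := by
    have h1 : 0 ≤ g.ginf A := g.ginf_max A 0 (by simpa using hAP)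
    have h2 : g.ginf A ≤ g.ginf a :=
      g.ginf_max a _ (g.pre_trans (g.ginf_dvd A) (g.lgcd_dvd_left a (g.Δ ^ i)))
    omega
  have hinfD : g.ginf D = 0 := by
    have h1 : 0 ≤ g.ginf D := g.ginf_max D 0 (by simpa using hDP)
    have h2 : g.ginf D ≤ g.ginf a :=
      g.ginf_max a _ (g.pre_trans (g.ginf_dvd D) hDa)
    omega
  have hsD : g.gsup D = i :=
    le_antisymm (g.gsup_min D i (g.lgcd_dvd_right d _)) (g.gsup_lgcd_pow hip)
  have hsA : g.gsup A = i := by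
    have h1 : g.gsup A ≤ i := g.gsup_min A i (g.lgcd_dvd_right a _)
    have h2 : g.gsup D ≤ g.gsup A := g.gsup_mono hDA
    omega
  have hDy : D * (D⁻¹ * A) = A := by group
  have hinfy : g.ginf (D⁻¹ * A) = 0 := by
    have h0 : 0 ≤ g.ginf (D⁻¹ * A) := g.ginf_max _ 0 (by simpa using hDA)
    have hq : g.Δ ^ (-(g.ginf (D⁻¹ * A))) * (D⁻¹ * g.Δ ^ i) ∈ g.P := by
      have e : g.Δ ^ (-(g.ginf (D⁻¹ * A))) * (D⁻¹ * g.Δ ^ i)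
          = ((g.Δ ^ (g.ginf (D⁻¹ * A)))⁻¹ * (D⁻¹ * A)) * (A⁻¹ * g.Δ ^ i) := by group
      rw [e]
      exact mul_mem (g.ginf_dvd (D⁻¹ * A)) (by rw [hAdef]; exact g.lgcd_dvd_right a _)
    have hsup : g.gsup D ≤ i - g.ginf (D⁻¹ * A) := by
      apply g.gsup_min
      have e : D⁻¹ * g.Δ ^ (i - g.ginf (D⁻¹ * A))
          = g.Δ ^ (g.ginf (D⁻¹ * A)) *
              (g.Δ ^ (-(g.ginf (D⁻¹ * A))) * (D⁻¹ * g.Δ ^ i)) *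
              g.Δ ^ (-(g.ginf (D⁻¹ * A))) := by group
      rw [e]; exact g.conj_zpow_mem' hq h0
    omega
  have habs : g.Absorbable (D⁻¹ * A) := by
    refine ⟨Or.inl hinfy, D, ?_, ?_⟩
    · rw [hDy, hinfA, hinfD]
    · rw [hDy, hsA, hsD]
  have hstep : g.Step (g.vtx D) (g.vtx A) := by
    refine Or.inr ⟨D⁻¹ * A, habs, ?_⟩
    have hrep : g.rep (g.vtx D) = D := g.rep_eq D hinfD
    rw [hrep, hDy]
  by_cases heq : g.vtx A = g.vtx D
  · exact Or.inl heq
  · exact Or.inr ⟨heq, Or.inr hstep⟩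

lemma dal_le_one {v w : Vertex g} (h : v = w ∨ g.calGraph.Adj v w) : g.dAL v w ≤ 1 := by
  show g.calGraph.dist v w ≤ 1
  rcases h with rfl | h
  · simp [SimpleGraph.dist_self]
  · exact le_of_eq (SimpleGraph.dist_eq_one_iff_adj.mpr h)

lemma dal_le_two {u v w : Vertex g} (h1 : u = v ∨ g.calGraph.Adj u v)
    (h2 : w = v ∨ g.calGraph.Adj w v) : g.dAL u w ≤ 2 := by
  show g.calGraph.dist u w ≤ 2
  rcases h1 with rfl | h1
  · rcases h2 with rfl | h2
    · simp [SimpleGraph.dist_self]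
    · have := SimpleGraph.dist_eq_one_iff_adj.mpr h2.symm
      omega
  · rcases h2 with rfl | h2
    · have := SimpleGraph.dist_eq_one_iff_adj.mpr h1
      omega
    · simpa using SimpleGraph.dist_le
        (SimpleGraph.Walk.cons h1 (SimpleGraph.Walk.cons h2.symm SimpleGraph.Walk.nil))

end GarsideGroup

/-- Lemma 2.15: with `d = v̄ ∧ w̄` and `p = sup d`, for every
`0 ≤ i ≤ p` the vertices `(v̄ ∧ Δ^i)Δ^ℤ` and `(d ∧ Δ^i)Δ^ℤ` are at distance at most `1`,
and likewise for `w̄`; consequently the initial segments of length `p` of the preferred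
paths `A(1,v)` and `A(1,w)` are at Hausdorff distance at most `2` in `C_AL(G)`. -/
theorem GarsideGroup.initial_segments_close {G : Type*} [Group G] (g : GarsideGroup G)
    (v w : GarsideGroup.Vertex g) :
    (∀ i : ℤ, 0 ≤ i → i ≤ g.gsup (g.lgcd (g.rep v) (g.rep w)) →
      g.dAL (g.vtx (g.lgcd (g.rep v) (g.Δ ^ i)))
        (g.vtx (g.lgcd (g.lgcd (g.rep v) (g.rep w)) (g.Δ ^ i))) ≤ 1 ∧
      g.dAL (g.vtx (g.lgcd (g.rep w) (g.Δ ^ i)))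
        (g.vtx (g.lgcd (g.lgcd (g.rep v) (g.rep w)) (g.Δ ^ i))) ≤ 1) ∧
    (∀ i : ℤ, 0 ≤ i → i ≤ g.gsup (g.lgcd (g.rep v) (g.rep w)) →
      ∃ j : ℤ, 0 ≤ j ∧ j ≤ g.gsup (g.lgcd (g.rep v) (g.rep w)) ∧
        g.dAL (g.vtx (g.lgcd (g.rep v) (g.Δ ^ i)))
          (g.vtx (g.lgcd (g.rep w) (g.Δ ^ j))) ≤ 2) ∧
    (∀ j : ℤ, 0 ≤ j → j ≤ g.gsup (g.lgcd (g.rep v) (g.rep w)) →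
      ∃ i : ℤ, 0 ≤ i ∧ i ≤ g.gsup (g.lgcd (g.rep v) (g.rep w)) ∧
        g.dAL (g.vtx (g.lgcd (g.rep v) (g.Δ ^ i)))
          (g.vtx (g.lgcd (g.rep w) (g.Δ ^ j))) ≤ 2) := by
  have hrv : g.rep v ∈ g.P := by
    have := g.ginf_dvd (g.rep v); rw [g.rep_inf v] at this; simpa using this
  have hrw : g.rep w ∈ g.P := by
    have := g.ginf_dvd (g.rep w); rw [g.rep_inf w] at this; simpa using this
  have hdP : g.lgcd (g.rep v) (g.rep w) ∈ g.P := by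
    have := g.lgcd_greatest (g.rep v) (g.rep w) 1 (by simpa using hrv) (by simpa using hrw)
    simpa using this
  have hmv : ∀ i : ℤ, 0 ≤ i → i ≤ g.gsup (g.lgcd (g.rep v) (g.rep w)) →
      g.vtx (g.lgcd (g.rep v) (g.Δ ^ i))
        = g.vtx (g.lgcd (g.lgcd (g.rep v) (g.rep w)) (g.Δ ^ i)) ∨
      g.calGraph.Adj (g.vtx (g.lgcd (g.rep v) (g.Δ ^ i)))
        (g.vtx (g.lgcd (g.lgcd (g.rep v) (g.rep w)) (g.Δ ^ i))) :=
    fun i h1 h2 => g.main_step (g.lgcd (g.rep v) (g.rep w)) (g.rep v) hdP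
      (g.lgcd_dvd_left _ _) (g.rep_inf v) h1 h2
  have hmw : ∀ i : ℤ, 0 ≤ i → i ≤ g.gsup (g.lgcd (g.rep v) (g.rep w)) →
      g.vtx (g.lgcd (g.rep w) (g.Δ ^ i))
        = g.vtx (g.lgcd (g.lgcd (g.rep v) (g.rep w)) (g.Δ ^ i)) ∨
      g.calGraph.Adj (g.vtx (g.lgcd (g.rep w) (g.Δ ^ i)))
        (g.vtx (g.lgcd (g.lgcd (g.rep v) (g.rep w)) (g.Δ ^ i))) :=
    fun i h1 h2 => g.main_step (g.lgcd (g.rep v) (g.rep w)) (g.rep w) hdP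
      (g.lgcd_dvd_right _ _) (g.rep_inf w) h1 h2
  refine ⟨fun i h1 h2 => ⟨g.dal_le_one (hmv i h1 h2), g.dal_le_one (hmw i h1 h2)⟩,
    fun i h1 h2 => ⟨i, h1, h2, g.dal_le_two (hmv i h1 h2) (hmw i h1 h2)⟩,
    fun j h1 h2 => ⟨j, h1, h2, g.dal_le_two (hmv j h1 h2) (hmw j h1 h2)⟩⟩
end
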